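/- Let Θ₀ ⊆ ℝ^ℓ be the compact convex set Θ₀ = {E[m·l] : m measurable, m_L ≤ m ≤ m_U P-a.s.} with l integrable and m_L ≤ m_U bounded measurable. Then for the j-th coordinate, the projection {θ^{(j)} : θ ∈ Θ₀} equals the interval [θ_L^{(j)}, θ_U^{(j)}] where θ_L^{(j)} = E[(1{l^{(j)} > 0} m_L + 1{l^{(j)} ≤ 0} m_U) l^{(j)}] and θ_U^{(j)} = E[(1{l^{(j)} ≤ 0} m_L + 1{l^{(j)} > 0} m_U) l^{(j)}]. -/

import Mathlib

open MeasureTheory Set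

/-! Since `m ↦ m * t` is monotone for `t > 0` and antitone for `t ≤ 0`, every selection
`mL ≤ m ≤ mU` satisfies `min (mL t) (mU t) ≤ m t ≤ max (mL t) (mU t)` with `t = φ (l ω)` for a
continuous linear functional `φ` (here the `j`-th coordinate), and
the sign-switching selections attain these bounds pointwise; after replacing `φ ∘ l` by a
measurable version they are measurable, so both endpoints are attained. The identified set is
convex, hence so is its image under the linear functional `φ`, which is therefore the whole
interval between the endpoints. -/

section

variable {Ω E : Type*} [MeasurableSpace Ω] {P : Measure Ω}
  [NormedAddCommGroup E] [NormedSpace ℝ E]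

def identifiedSet (P : Measure Ω) (mL mU : Ω → ℝ) (l : Ω → E) : Set E :=
  {θ | ∃ m : Ω → ℝ, Measurable m ∧ (∀ᵐ ω ∂P, mL ω ≤ m ω ∧ m ω ≤ mU ω) ∧
    θ = ∫ ω, m ω • l ω ∂P}

variable {mL mU m : Ω → ℝ} {l : Ω → E}

theorem integrable_smul_of_ae_mem_Icc (hL : Integrable (fun ω => mL ω • l ω) P)
    (hU : Integrable (fun ω => mU ω • l ω) P) (hm : AEStronglyMeasurable m P)
    (hl : AEStronglyMeasurable l P) (h : ∀ᵐ ω ∂P, mL ω ≤ m ω ∧ m ω ≤ mU ω) :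
    Integrable (fun ω => m ω • l ω) P := by
  refine (hL.norm.add hU.norm).mono' (hm.smul hl) ?_
  filter_upwards [h] with ω ⟨hLm, hmU⟩
  simp only [Pi.add_apply, norm_smul, Real.norm_eq_abs, ← add_mul]
  gcongr
  exact (abs_le_max_abs_abs hLm hmU).trans (max_le_add_of_nonneg (abs_nonneg _) (abs_nonneg _))

theorem convex_identifiedSet (hL : Integrable (fun ω => mL ω • l ω) P)
    (hU : Integrable (fun ω => mU ω • l ω) P) (hl : AEStronglyMeasurable l P) :
    Convex ℝ (identifiedSet P mL mU l) := by
  rintro _ ⟨m₁, hm₁, h₁, rfl⟩ _ ⟨m₂, hm₂, h₂, rfl⟩ a b ha hb hab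
  refine ⟨fun ω => a * m₁ ω + b * m₂ ω, (hm₁.const_mul a).add (hm₂.const_mul b), ?_, ?_⟩
  · filter_upwards [h₁, h₂] with ω hω₁ hω₂
    exact convex_Icc (mL ω) (mU ω) hω₁ hω₂ ha hb hab
  · have hi₁ : Integrable (fun ω => a • m₁ ω • l ω) P :=
      (integrable_smul_of_ae_mem_Icc hL hU hm₁.aestronglyMeasurable hl h₁).smul a
    have hi₂ : Integrable (fun ω => b • m₂ ω • l ω) P :=
      (integrable_smul_of_ae_mem_Icc hL hU hm₂.aestronglyMeasurable hl h₂).smul b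
    simp only [add_smul, mul_smul, integral_add hi₁ hi₂, integral_smul]

theorem apply_integral_smul [CompleteSpace E] (φ : E →L[ℝ] ℝ)
    (h : Integrable (fun ω => m ω • l ω) P) :
    φ (∫ ω, m ω • l ω ∂P) = ∫ ω, m ω * φ (l ω) ∂P := by
  simp [← φ.integral_comp_comm h]

theorem ite_pos_mul_eq_min {a b t : ℝ} (hab : a ≤ b) :
    (if 0 < t then a else b) * t = min (a * t) (b * t) := by
  split_ifs with ht
  · exact (min_eq_left (mul_le_mul_of_nonneg_right hab ht.le)).symm
  · exact (min_eq_right (mul_le_mul_of_nonpos_right hab (not_lt.mp ht))).symm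

theorem ite_nonpos_mul_eq_max {a b t : ℝ} (hab : a ≤ b) :
    (if t ≤ 0 then a else b) * t = max (a * t) (b * t) := by
  split_ifs with ht
  · exact (max_eq_left (mul_le_mul_of_nonpos_right hab ht)).symm
  · exact (max_eq_right (mul_le_mul_of_nonneg_right hab (not_le.mp ht).le)).symm

theorem exists_measurable_selection_mul_ae_eq_min {f : Ω → ℝ} (hf : AEMeasurable f P)
    (hmL : Measurable mL) (hmU : Measurable mU) (hle : ∀ᵐ ω ∂P, mL ω ≤ mU ω) :
    ∃ m : Ω → ℝ, Measurable m ∧ (∀ᵐ ω ∂P, mL ω ≤ m ω ∧ m ω ≤ mU ω) ∧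
      (fun ω => m ω * f ω) =ᵐ[P] fun ω => min (mL ω * f ω) (mU ω * f ω) := by
  refine ⟨fun ω => if 0 < hf.mk f ω then mL ω else mU ω,
    Measurable.ite (measurableSet_lt measurable_const hf.measurable_mk) hmL hmU, ?_, ?_⟩
  · filter_upwards [hle] with ω hω
    split_ifs
    exacts [⟨le_rfl, hω⟩, ⟨hω, le_rfl⟩]
  · filter_upwards [hle, hf.ae_eq_mk] with ω hω hfω
    rw [hfω]
    exact ite_pos_mul_eq_min hω

theorem exists_measurable_selection_mul_ae_eq_max {f : Ω → ℝ} (hf : AEMeasurable f P)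
    (hmL : Measurable mL) (hmU : Measurable mU) (hle : ∀ᵐ ω ∂P, mL ω ≤ mU ω) :
    ∃ m : Ω → ℝ, Measurable m ∧ (∀ᵐ ω ∂P, mL ω ≤ m ω ∧ m ω ≤ mU ω) ∧
      (fun ω => m ω * f ω) =ᵐ[P] fun ω => max (mL ω * f ω) (mU ω * f ω) := by
  refine ⟨fun ω => if hf.mk f ω ≤ 0 then mL ω else mU ω,
    Measurable.ite (measurableSet_le hf.measurable_mk measurable_const) hmL hmU, ?_, ?_⟩
  · filter_upwards [hle] with ω hω
    split_ifs
    exacts [⟨le_rfl, hω⟩, ⟨hω, le_rfl⟩]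
  · filter_upwards [hle, hf.ae_eq_mk] with ω hω hfω
    rw [hfω]
    exact ite_nonpos_mul_eq_max hω

theorem mul_mem_uIcc_of_mem_Icc {a b x t : ℝ} (h : x ∈ Icc a b) : x * t ∈ uIcc (a * t) (b * t) :=
  image_mul_const_uIcc t a b ▸ mem_image_of_mem _ (Icc_subset_uIcc h)

theorem image_identifiedSet_eq_Icc [CompleteSpace E] (φ : E →L[ℝ] ℝ)
    (hl : AEStronglyMeasurable l P) (hmL : Measurable mL) (hmU : Measurable mU)
    (hle : ∀ᵐ ω ∂P, mL ω ≤ mU ω) (hL : Integrable (fun ω => mL ω • l ω) P)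
    (hU : Integrable (fun ω => mU ω • l ω) P) :
    φ '' identifiedSet P mL mU l =
      Icc (∫ ω, min (mL ω * φ (l ω)) (mU ω * φ (l ω)) ∂P)
        (∫ ω, max (mL ω * φ (l ω)) (mU ω * φ (l ω)) ∂P) := by
  have hint {m : Ω → ℝ} (hm : Measurable m) (h : ∀ᵐ ω ∂P, mL ω ≤ m ω ∧ m ω ≤ mU ω) :
      Integrable (fun ω => m ω • l ω) P :=
    integrable_smul_of_ae_mem_Icc hL hU hm.aestronglyMeasurable hl h
  have hφint {m : Ω → ℝ} (h : Integrable (fun ω => m ω • l ω) P) :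
      Integrable (fun ω => m ω * φ (l ω)) P := by
    simpa using φ.integrable_comp h
  have hφl : AEMeasurable (fun ω => φ (l ω)) P :=
    (φ.continuous.comp_aestronglyMeasurable hl).aemeasurable
  refine subset_antisymm ?_ ?_
  · rintro _ ⟨_, ⟨m, hm, hmb, rfl⟩, rfl⟩
    rw [apply_integral_smul φ (hint hm hmb)]
    have hmem : ∀ᵐ ω ∂P, m ω * φ (l ω) ∈ uIcc (mL ω * φ (l ω)) (mU ω * φ (l ω)) :=
      hmb.mono fun ω h => mul_mem_uIcc_of_mem_Icc h
    exact ⟨integral_mono_ae ((hφint hL).inf (hφint hU)) (hφint (hint hm hmb))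
        (hmem.mono fun _ h => h.1),
      integral_mono_ae (hφint (hint hm hmb)) ((hφint hL).sup (hφint hU))
        (hmem.mono fun _ h => h.2)⟩
  · refine (convex_iff_ordConnected.mp
      ((convex_identifiedSet hL hU hl).linear_image (φ : E →ₗ[ℝ] ℝ))).out ?_ ?_
    · obtain ⟨m, hm, hmb, hmin⟩ := exists_measurable_selection_mul_ae_eq_min hφl hmL hmU hle
      exact ⟨_, ⟨m, hm, hmb, rfl⟩, (apply_integral_smul φ (hint hm hmb)).trans
        (integral_congr_ae hmin)⟩
    · obtain ⟨m, hm, hmb, hmax⟩ := exists_measurable_selection_mul_ae_eq_max hφl hmL hmU hle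
      exact ⟨_, ⟨m, hm, hmb, rfl⟩, (apply_integral_smul φ (hint hm hmb)).trans
        (integral_congr_ae hmax)⟩

end

theorem stmt14 {Ω : Type*} [MeasurableSpace Ω] (P : Measure Ω)
    {ℓ : ℕ} (l : Ω → EuclideanSpace ℝ (Fin ℓ)) (hl : Integrable l P)
    (mL mU : Ω → ℝ) (hmL : Measurable mL) (hmU : Measurable mU)
    (hle : ∀ᵐ ω ∂P, mL ω ≤ mU ω)
    (hbdd : ∃ C : ℝ, ∀ ω, |mL ω| ≤ C ∧ |mU ω| ≤ C)
    (j : Fin ℓ) :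
    (fun θ : EuclideanSpace ℝ (Fin ℓ) => θ j) ''
        {θ : EuclideanSpace ℝ (Fin ℓ) |
          ∃ m : Ω → ℝ, Measurable m ∧ (∀ᵐ ω ∂P, mL ω ≤ m ω ∧ m ω ≤ mU ω) ∧
            θ = ∫ ω, m ω • l ω ∂P} =
      Set.Icc
        (∫ ω, (if 0 < l ω j then mL ω else mU ω) * l ω j ∂P)
        (∫ ω, (if l ω j ≤ 0 then mL ω else mU ω) * l ω j ∂P) := by
  obtain ⟨C, hC⟩ := hbdd
  have hsmul {m : Ω → ℝ} (hm : Measurable m) (hmC : ∀ ω, |m ω| ≤ C) :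
      Integrable (fun ω => m ω • l ω) P :=
    hl.bdd_smul C hm.aestronglyMeasurable (ae_of_all _ hmC)
  rw [integral_congr_ae (hle.mono fun ω h => ite_pos_mul_eq_min (t := l ω j) h),
    integral_congr_ae (hle.mono fun ω h => ite_nonpos_mul_eq_max (t := l ω j) h)]
  exact image_identifiedSet_eq_Icc (EuclideanSpace.proj j) hl.1 hmL hmU hle
    (hsmul hmL fun ω => (hC ω).1) (hsmul hmU fun ω => (hC ω).2)
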